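/- Let k ≥ 1 and d ≥ 2 be integers and let T = T₁ ∨ T₂ ∨ ⋯ ∨ T_{d+1} be the sequential join with T₁ = T_{d+1} = K₁ and T₂ = ⋯ = T_d = K_k. Then T is a k-connected graph of order kd - k + 2 and diameter d, and its number of edges is ((3d-5)k² + (5-d)k)/2; moreover, the distance in T between the vertex of T₁ and the vertex of T_{d+1} equals d. -/

import Mathlib

/-- A graph is `k`-connected if it has more than `k` vertices and remains connected
whenever fewer than `k` vertices are deleted. -/
def SimpleGraph.KConnected {V : Type*} [Fintype V] (k : ℕ) (G : SimpleGraph V) : Prop :=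
  k < Fintype.card V ∧ ∀ S : Set V, S.ncard < k → (G.induce Sᶜ).Connected

/-- The level of a vertex `v` of the sequential join
`T = T₁ ∨ T₂ ∨ ⋯ ∨ T_{d+1}` with `T₁ = T_{d+1} = K₁` and `T₂ = ⋯ = T_d = K_k`:
vertex `0` is the vertex of `T₁` (level `0`), vertices `1, …, k*(d-1)` form the middle
copies of `K_k` (levels `1, …, d-1`, `k` vertices each), and vertex `k*(d-1)+1` is the
vertex of `T_{d+1}` (level `d`). -/
def oreLevel (k d v : ℕ) : ℕ :=
  if v = 0 then 0 else if v ≤ k * (d - 1) then (v - 1) / k + 1 else d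

/-- The sequential join `T = T₁ ∨ T₂ ∨ ⋯ ∨ T_{d+1}` with `T₁ = T_{d+1} = K₁` and
`T₂ = ⋯ = T_d = K_k`: two distinct vertices are adjacent iff their levels differ by at
most `1`. -/
def seqJoinT (k d : ℕ) : SimpleGraph (Fin (k * (d - 1) + 2)) :=
  SimpleGraph.fromRel fun v w =>
    oreLevel k d v.val ≤ oreLevel k d w.val + 1 ∧ oreLevel k d w.val ≤ oreLevel k d v.val + 1

/-!
Every sequential join of complete graphs is a level graph: the vertices carry levels in `ℕ` and
two distinct vertices are adjacent iff their levels differ by at most one. When the occupied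
levels form an interval, a shortest path between two vertices climbs one level per step, so
their distance is `max |ℓ u - ℓ v| 1`; this gives the diameter and the distance between the two
ends. Deleting fewer than `k` vertices leaves each middle level (of size `k`) occupied, so the
occupied levels still form an interval and the graph stays connected. The edge count is the
handshake lemma, a vertex at level `j` having `c (j - 1) + c j + c (j + 1) - 1` neighbours,
where `c j` is the number of vertices at level `j`.
-/

open Finset

theorem Set.ordConnected_of_Ioo_subset_of_subset_Icc {α : Type*} [PartialOrder α] {s : Set α}
    {a b : α} (h₁ : Set.Ioo a b ⊆ s) (h₂ : s ⊆ Set.Icc a b) : s.OrdConnected :=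
  Set.ordConnected_of_Ioo fun _ hx _ hy _ => (Set.Ioo_subset_Ioo (h₂ hx).1 (h₂ hy).2).trans h₁

namespace SimpleGraph

variable {V : Type*}

def levelGraph (ℓ : V → ℕ) : SimpleGraph V :=
  fromRel fun v w => ℓ v ≤ ℓ w + 1 ∧ ℓ w ≤ ℓ v + 1

variable {ℓ : V → ℕ}

lemma levelGraph_adj {v w : V} :
    (levelGraph ℓ).Adj v w ↔ v ≠ w ∧ ℓ v ≤ ℓ w + 1 ∧ ℓ w ≤ ℓ v + 1 := by
  rw [levelGraph, fromRel_adj, and_comm (a := ℓ w ≤ _), or_self]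

lemma induce_levelGraph (s : Set V) :
    (levelGraph ℓ).induce s = levelGraph fun v : s => ℓ v := by
  ext v w
  simp [levelGraph_adj, Subtype.ext_iff]

lemma levelGraph_le_add_length {u v : V} (p : (levelGraph ℓ).Walk u v) :
    ℓ v ≤ ℓ u + p.length := by
  induction p with
  | nil => simp
  | cons h _ ih =>
    rw [Walk.length_cons]
    have := (levelGraph_adj.1 h).2.2
    omega

lemma levelGraph_exists_walk_length_le (hℓ : (Set.range ℓ).OrdConnected) {u v : V}
    (huv : u ≠ v) (hle : ℓ u ≤ ℓ v) :
    ∃ p : (levelGraph ℓ).Walk u v, p.length ≤ max (ℓ v - ℓ u) 1 := by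
  induction h : ℓ v - ℓ u generalizing u with
  | zero => exact ⟨.cons (levelGraph_adj.2 ⟨huv, by omega, by omega⟩) .nil, by simp⟩
  | succ n ih =>
    rcases n with _ | n
    · exact ⟨.cons (levelGraph_adj.2 ⟨huv, by omega, by omega⟩) .nil, by simp⟩
    obtain ⟨w, hw⟩ : ℓ u + 1 ∈ Set.range ℓ := hℓ.out ⟨u, rfl⟩ ⟨v, rfl⟩ ⟨by omega, by omega⟩
    obtain ⟨p, hp⟩ := ih (u := w) (by rintro rfl; omega) (by omega) (by omega)
    refine ⟨.cons (levelGraph_adj.2 ⟨by rintro rfl; omega, by omega, by omega⟩) p, ?_⟩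
    rw [Walk.length_cons]
    omega

lemma levelGraph_connected [Nonempty V] (hℓ : (Set.range ℓ).OrdConnected) :
    (levelGraph ℓ).Connected := by
  refine (connected_iff _).2 ⟨fun u v => ?_, ‹_›⟩
  rcases eq_or_ne u v with rfl | huv
  · rfl
  rcases le_total (ℓ u) (ℓ v) with hle | hle
  · exact ⟨(levelGraph_exists_walk_length_le hℓ huv hle).choose⟩
  · exact ⟨(levelGraph_exists_walk_length_le hℓ huv.symm hle).choose.reverse⟩

lemma levelGraph_dist (hℓ : (Set.range ℓ).OrdConnected) {u v : V} (huv : u ≠ v)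
    (hle : ℓ u ≤ ℓ v) : (levelGraph ℓ).dist u v = max (ℓ v - ℓ u) 1 := by
  obtain ⟨p, hp⟩ := levelGraph_exists_walk_length_le hℓ huv hle
  obtain ⟨q, hq⟩ := Reachable.exists_walk_length_eq_dist ⟨p⟩
  have h₁ := Reachable.pos_dist_of_ne ⟨p⟩ huv
  have h₂ := levelGraph_le_add_length q
  have h₃ := dist_le p
  omega

lemma levelGraph_diam [Finite V] (hℓ : (Set.range ℓ).OrdConnected) {D : ℕ} (hD : 1 ≤ D)
    (hbound : ∀ v, ℓ v ≤ D) {u v : V} (hu : ℓ u = 0) (hv : ℓ v = D) :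
    (levelGraph ℓ).diam = D := by
  have : Nonempty V := ⟨u⟩
  have hdist : ∀ a b, (levelGraph ℓ).dist a b ≤ D := by
    intro a b
    rcases eq_or_ne a b with rfl | hab
    · simp
    have := hbound a
    have := hbound b
    rcases le_total (ℓ a) (ℓ b) with hle | hle
    · rw [levelGraph_dist hℓ hab hle]; omega
    · rw [dist_comm, levelGraph_dist hℓ hab.symm hle]; omega
  have huv : (levelGraph ℓ).dist u v = D := by
    rw [levelGraph_dist hℓ (by rintro rfl; omega) (by omega)]; omega
  obtain ⟨a, b, hab⟩ := exists_dist_eq_diam (G := levelGraph ℓ)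
  have := hdist a b
  have := dist_le_diam (connected_iff_ediam_ne_top.1 (levelGraph_connected hℓ)) (u := u) (v := v)
  omega

section Degrees

variable [Fintype V] [DecidableRel (levelGraph ℓ).Adj]

lemma levelGraph_degree_add_one (v : V) :
    (levelGraph ℓ).degree v + 1 =
      #{w | ℓ w = ℓ v} + #{w | ℓ w = ℓ v + 1} + #{w | ℓ v = ℓ w + 1} := by
  classical
  have hv : #{w | w = v} = 1 := card_eq_one.2 ⟨v, by ext; simp⟩
  rw [← card_neighborFinset_eq_degree, neighborFinset_eq_filter]
  conv_lhs => rw [← hv]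
  simp only [card_filter, ← sum_add_distrib]
  refine sum_congr rfl fun w _ => ?_
  rcases eq_or_ne w v with rfl | hwv
  · simp
  · simp only [levelGraph_adj, hwv.symm, hwv, ne_eq, not_false_eq_true, true_and, if_false]
    split_ifs <;> omega

lemma levelGraph_sum_degree_add_one {t : Finset ℕ} (ht : ∀ v, ℓ v ∈ t) :
    ∑ v, ((levelGraph ℓ).degree v + 1) =
      ∑ j ∈ t, #{v | ℓ v = j} * (#{v | ℓ v = j} + 2 * #{v | ℓ v = j + 1}) := by
  have hswap : ∑ v, #{w | ℓ v = ℓ w + 1} = ∑ v, #{w | ℓ w = ℓ v + 1} := by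
    simp only [card_filter]
    exact sum_comm
  calc ∑ v, ((levelGraph ℓ).degree v + 1)
      = ∑ v, (#{w | ℓ w = ℓ v} + 2 * #{w | ℓ w = ℓ v + 1}) := by
        simp only [levelGraph_degree_add_one, sum_add_distrib, hswap, ← mul_sum]
        ring
    _ = ∑ j ∈ t, ∑ v with ℓ v = j, (#{w | ℓ w = j} + 2 * #{w | ℓ w = j + 1}) :=
        (sum_fiberwise_of_maps_to' (fun v _ => ht v)
          fun j => #{w | ℓ w = j} + 2 * #{w | ℓ w = j + 1}).symm
    _ = _ := by simp only [sum_const, smul_eq_mul]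

end Degrees

end SimpleGraph

open SimpleGraph

lemma seqJoinT_eq_levelGraph (k d : ℕ) :
    seqJoinT k d = levelGraph fun v : Fin (k * (d - 1) + 2) => oreLevel k d v :=
  rfl

section oreLevel

variable {k d : ℕ}

lemma mul_add_le_mul_sub_one {i : ℕ} (hi : i + 1 < d) : i * k + k ≤ k * (d - 1) :=
  calc i * k + k = k * (i + 1) := by ring
    _ ≤ k * (d - 1) := Nat.mul_le_mul_left k (by omega)

lemma oreLevel_zero : oreLevel k d 0 = 0 :=
  rfl

lemma oreLevel_last : oreLevel k d (k * (d - 1) + 1) = d := by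
  simp [oreLevel]

lemma oreLevel_lt (hd : d ≠ 0) {v : ℕ} (hv : v ≤ k * (d - 1)) : oreLevel k d v < d := by
  rw [oreLevel, if_pos hv]
  split_ifs with h0
  · omega
  · have hk : 0 < k := Nat.pos_of_ne_zero (by rintro rfl; omega)
    have := (Nat.div_lt_iff_lt_mul hk).2 (show v - 1 < (d - 1) * k by rw [mul_comm]; omega)
    omega

lemma oreLevel_le (hd : d ≠ 0) (v : ℕ) : oreLevel k d v ≤ d := by
  by_cases hv : v ≤ k * (d - 1)
  · exact (oreLevel_lt hd hv).le
  · rw [oreLevel, if_neg (by omega), if_neg hv]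

lemma oreLevel_eq_zero_iff (hd : d ≠ 0) {v : ℕ} : oreLevel k d v = 0 ↔ v = 0 := by
  unfold oreLevel
  split_ifs <;> grind

lemma oreLevel_eq_self_iff (hd : d ≠ 0) {v : ℕ} (hv : v ≤ k * (d - 1) + 1) :
    oreLevel k d v = d ↔ v = k * (d - 1) + 1 := by
  by_cases hv' : v ≤ k * (d - 1)
  · have := oreLevel_lt hd hv'
    omega
  · rw [oreLevel, if_neg (by omega), if_neg hv']
    omega

lemma oreLevel_eq_succ_iff {i : ℕ} (hi : i + 1 < d) {v : ℕ} :
    oreLevel k d v = i + 1 ↔ i * k < v ∧ v ≤ i * k + k := by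
  have := mul_add_le_mul_sub_one (k := k) hi
  unfold oreLevel
  split_ifs with h0 hv
  · grind
  · rcases Nat.eq_zero_or_pos k with rfl | hk
    · omega
    rw [Nat.add_right_cancel_iff, Nat.div_eq_iff hk]
    omega
  · grind

lemma card_oreLevel_eq_zero (hd : d ≠ 0) :
    #{v : Fin (k * (d - 1) + 2) | oreLevel k d v = 0} = 1 :=
  card_eq_one.2 ⟨0, by ext v; simp only [mem_filter, mem_univ, true_and, mem_singleton,
    oreLevel_eq_zero_iff hd, Fin.ext_iff, Fin.val_zero]⟩

lemma card_oreLevel_eq_self (hd : d ≠ 0) :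
    #{v : Fin (k * (d - 1) + 2) | oreLevel k d v = d} = 1 :=
  card_eq_one.2 ⟨Fin.last _, by
    ext v
    simp [oreLevel_eq_self_iff hd (Nat.lt_succ_iff.1 v.isLt), Fin.ext_iff]⟩

lemma card_oreLevel_eq_succ {i : ℕ} (hi : i + 1 < d) :
    #{v : Fin (k * (d - 1) + 2) | oreLevel k d v = i + 1} = k := by
  have := mul_add_le_mul_sub_one (k := k) hi
  have hIoc : ({v : Fin (k * (d - 1) + 2) | oreLevel k d v = i + 1} : Finset _) =
      Ioc ⟨i * k, by omega⟩ ⟨i * k + k, by omega⟩ := by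
    ext v
    simp only [mem_filter, mem_univ, true_and, mem_Ioc, Fin.lt_def, Fin.le_def,
      oreLevel_eq_succ_iff hi]
  rw [hIoc, Fin.card_Ioc]
  simp

lemma card_oreLevel_eq_of_lt (hd : d ≠ 0) {j : ℕ} (hj : d < j) :
    #{v : Fin (k * (d - 1) + 2) | oreLevel k d v = j} = 0 :=
  card_eq_zero.2 <| filter_eq_empty_iff.2 fun v _ => by
    have := oreLevel_le (k := k) hd v
    omega

lemma exists_notMem_oreLevel_eq {S : Set (Fin (k * (d - 1) + 2))} (hS : S.ncard < k) {j : ℕ}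
    (hj₀ : 0 < j) (hjd : j < d) : ∃ v ∉ S, oreLevel k d v = j := by
  obtain ⟨i, rfl⟩ : ∃ i, j = i + 1 := ⟨j - 1, by omega⟩
  have hlt : S.ncard < {v : Fin (k * (d - 1) + 2) | oreLevel k d v = i + 1}.ncard := by
    rw [← coe_filter_univ, Set.ncard_coe_finset, card_oreLevel_eq_succ hjd]
    exact hS
  obtain ⟨v, hv, hvS⟩ := Set.exists_mem_notMem_of_ncard_lt_ncard hlt
  exact ⟨v, hvS, hv⟩

lemma ordConnected_oreLevel_image_compl (hd : d ≠ 0) {S : Set (Fin (k * (d - 1) + 2))}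
    (hS : S.ncard < k) : ((fun v : Fin (k * (d - 1) + 2) => oreLevel k d v) '' Sᶜ).OrdConnected :=
  Set.ordConnected_of_Ioo_subset_of_subset_Icc (a := 0) (b := d)
    (fun _ ⟨hj₀, hjd⟩ => (exists_notMem_oreLevel_eq hS hj₀ hjd).imp fun _ => id)
    (Set.image_subset_iff.2 fun v _ => ⟨Nat.zero_le _, oreLevel_le hd v⟩)

end oreLevel

lemma seqJoinT_kConnected {k d : ℕ} (hd : 2 ≤ d) : (seqJoinT k d).KConnected k := by
  refine ⟨?_, fun S hS => ?_⟩
  · have := Nat.le_mul_of_pos_right k (show 0 < d - 1 by omega)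
    rw [Fintype.card_fin]
    omega
  obtain ⟨v, hv, -⟩ := exists_notMem_oreLevel_eq hS zero_lt_one hd
  have : Nonempty ↥Sᶜ := ⟨⟨v, hv⟩⟩
  rw [seqJoinT_eq_levelGraph, induce_levelGraph]
  refine levelGraph_connected ?_
  simpa only [Set.image_eq_range] using ordConnected_oreLevel_image_compl (by omega) hS

lemma ordConnected_range_oreLevel {k d : ℕ} (hk : 1 ≤ k) (hd : d ≠ 0) :
    (Set.range fun v : Fin (k * (d - 1) + 2) => oreLevel k d v).OrdConnected := by
  simpa using ordConnected_oreLevel_image_compl hd (S := ∅) (by rw [Set.ncard_empty]; omega)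

lemma seqJoinT_dist_zero_last {k d : ℕ} (hk : 1 ≤ k) (hd : d ≠ 0) :
    (seqJoinT k d).dist ⟨0, by omega⟩ (Fin.last _) = d := by
  rw [seqJoinT_eq_levelGraph, levelGraph_dist (ordConnected_range_oreLevel hk hd)
    (by simp [Fin.ext_iff]) (Nat.zero_le _)]
  change max (oreLevel k d (k * (d - 1) + 1) - oreLevel k d 0) 1 = d
  rw [oreLevel_last, oreLevel_zero]
  omega

lemma seqJoinT_diam {k d : ℕ} (hk : 1 ≤ k) (hd : d ≠ 0) : (seqJoinT k d).diam = d :=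
  levelGraph_diam (ordConnected_range_oreLevel hk hd) (by omega) (fun v => oreLevel_le hd v)
    (u := ⟨0, by omega⟩) (v := Fin.last _) oreLevel_zero oreLevel_last

lemma sum_range_mul_add_two_mul {c : ℕ → ℕ} {k d : ℕ} (hd : 2 ≤ d) (h₀ : c 0 = 1)
    (hmid : ∀ i, i + 1 < d → c (i + 1) = k) (hd₀ : c d = 1) (hd₁ : c (d + 1) = 0) :
    ∑ j ∈ range (d + 1), c j * (c j + 2 * c (j + 1)) = (3 * d - 5) * k ^ 2 + 4 * k + 2 := by
  obtain ⟨e, rfl⟩ : ∃ e, d = e + 2 := ⟨d - 2, by omega⟩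
  have hsum : ∑ i ∈ range e, c (i + 1) * (c (i + 1) + 2 * c (i + 1 + 1)) = e * (3 * k ^ 2) :=
    calc ∑ i ∈ range e, c (i + 1) * (c (i + 1) + 2 * c (i + 1 + 1))
        = ∑ i ∈ range e, 3 * k ^ 2 := sum_congr rfl fun i hi => by
          have := mem_range.1 hi
          rw [hmid i (by omega), hmid (i + 1) (by omega)]
          ring
      _ = e * (3 * k ^ 2) := by rw [sum_const, card_range, smul_eq_mul]
  rw [sum_range_succ, sum_range_succ, sum_range_succ', hsum, h₀, hd₀, hd₁, hmid 0 (by omega),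
    hmid e (by omega), show 3 * (e + 2) - 5 = 3 * e + 1 by omega]
  ring

lemma seqJoinT_ncard_edgeSet {k d : ℕ} (hd : 2 ≤ d) :
    ((seqJoinT k d).edgeSet.ncard : ℤ) =
      ((3 * (d : ℤ) - 5) * (k : ℤ) ^ 2 + (5 - (d : ℤ)) * (k : ℤ)) / 2 := by
  classical
  have hsum := levelGraph_sum_degree_add_one (ℓ := fun v : Fin (k * (d - 1) + 2) => oreLevel k d v)
    (t := range (d + 1)) fun v => mem_range.2 (Nat.lt_succ_of_le (oreLevel_le (by omega) v))
  rw [sum_add_distrib, sum_degrees_eq_twice_card_edges,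
    sum_range_mul_add_two_mul hd (card_oreLevel_eq_zero (by omega))
      (fun _ hi => card_oreLevel_eq_succ hi) (card_oreLevel_eq_self (by omega))
      (card_oreLevel_eq_of_lt (by omega) (by omega))] at hsum
  simp only [sum_const, card_univ, Fintype.card_fin, smul_eq_mul, mul_one] at hsum
  rw [seqJoinT_eq_levelGraph, ← coe_edgeFinset, Set.ncard_coe_finset]
  have h2E : (3 * (d : ℤ) - 5) * k ^ 2 + (5 - d) * k =
      2 * #(levelGraph fun v : Fin (k * (d - 1) + 2) => oreLevel k d v).edgeFinset := by
    have := congrArg (Nat.cast : ℕ → ℤ) hsum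
    push_cast [Nat.cast_sub (by omega : 5 ≤ 3 * d), Nat.cast_sub (by omega : 1 ≤ d)] at this
    linarith
  rw [h2E, Int.mul_ediv_cancel_left _ two_ne_zero]

/-- For `k ≥ 1` and `d ≥ 2`, the sequential join `T = K₁ ∨ K_k ∨ ⋯ ∨ K_k ∨ K₁` (with `d-1`
middle copies of `K_k`) is a `k`-connected graph of order `kd - k + 2` and diameter `d`
with `((3d-5)k² + (5-d)k)/2` edges, and the distance between the vertex of `T₁` and the
vertex of `T_{d+1}` equals `d`. -/
theorem seqJoinT_properties (k d : ℕ) (hk : 1 ≤ k) (hd : 2 ≤ d) :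
    (seqJoinT k d).KConnected k ∧
    Fintype.card (Fin (k * (d - 1) + 2)) = k * d - k + 2 ∧
    (seqJoinT k d).diam = d ∧
    ((seqJoinT k d).edgeSet.ncard : ℤ) =
      ((3 * (d : ℤ) - 5) * (k : ℤ) ^ 2 + (5 - (d : ℤ)) * (k : ℤ)) / 2 ∧
    (seqJoinT k d).dist ⟨0, Nat.succ_pos _⟩ ⟨k * (d - 1) + 1, Nat.lt_succ_self _⟩ = d := by
  refine ⟨seqJoinT_kConnected hd, ?_, seqJoinT_diam hk (by omega), seqJoinT_ncard_edgeSet hd,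
    seqJoinT_dist_zero_last hk (by omega)⟩
  rw [Fintype.card_fin, Nat.mul_sub_one]
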